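/- arXiv:1606.08383 — 3 statements merged into one kernel-verified Lean document; each statement's English description precedes it below -/
import Mathlib

section
/- Twist columns and orthogonal complements: for every a ∈ ℤ, the finite family { τ→(A)_b : b ∈ ℤ, a ⇒_π b } is a basis of the orthogonal complement { v ∈ ℂ^k : ⟨v|w⟩ = 0 for all w ∈ span(A_a, A_{a+1}, …, A_{π(a)−1}) } with respect to the standard symmetric bilinear form. -/
open scoped BigOperators

/-- The columns of `A` are `n`-periodic. -/
def ColPeriodic (k n : ℕ) (A : ℤ → Fin k → ℂ) : Prop :=
  ∀ a : ℤ, A (a + (n : ℤ)) = A a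

/-- `A` has rank `k`, i.e. its columns span `ℂ^k`. -/
def FullRank (k : ℕ) (A : ℤ → Fin k → ℂ) : Prop :=
  Submodule.span ℂ (Set.range A) = ⊤

/-- The Gale (componentwise) partial order on finite subsets of `ℤ` of equal
cardinality: `B ≼ C` iff they have the same cardinality and, for each `i`, the
`i`-th smallest element of `B` is at most the `i`-th smallest element of `C`
(equivalently, the counting condition below). -/
def galeLE (B C : Finset ℤ) : Prop :=
  B.card = C.card ∧
    ∀ t : ℤ, (B.filter fun x => t ≤ x).card ≤ (C.filter fun x => t ≤ x).card

/-- The columns of `A` indexed by `J` form a basis of `ℂ^k`. -/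
def IsColBasis (k : ℕ) (A : ℤ → Fin k → ℂ) (J : Finset ℤ) : Prop :=
  J.card = k ∧ LinearIndependent ℂ (fun j : (J : Set ℤ) => A (j : ℤ)) ∧
    Submodule.span ℂ (A '' (J : Set ℤ)) = ⊤

/-- `I` is the `≼_a`-minimal `k`-element subset of `{a, a+1, …, a+n-1}` whose
columns form a basis of `ℂ^k` (the `a`-minimal basis `I→_a`). -/
def IsMinBasis (k n : ℕ) (A : ℤ → Fin k → ℂ) (a : ℤ) (I : Finset ℤ) : Prop :=
  I ⊆ Finset.Ico a (a + (n : ℤ)) ∧ IsColBasis k A I ∧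
    ∀ J : Finset ℤ, J ⊆ Finset.Ico a (a + (n : ℤ)) → IsColBasis k A J → galeLE I J

/-- `I` is the `≼_{a+1}`-maximal `k`-element subset of `{a-n+1, …, a}` whose
columns form a basis of `ℂ^k` (the `a`-maximal basis `I←_a`).  Note that on
representatives in `{a-n+1, …, a}` the cyclic order `≺_{a+1}` agrees with the
usual order of `ℤ`. -/
def IsMaxBasis (k n : ℕ) (A : ℤ → Fin k → ℂ) (a : ℤ) (I : Finset ℤ) : Prop :=
  I ⊆ Finset.Ioc (a - (n : ℤ)) a ∧ IsColBasis k A I ∧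
    ∀ J : Finset ℤ, J ⊆ Finset.Ioc (a - (n : ℤ)) a → IsColBasis k A J → galeLE J I

/-- The standard symmetric bilinear form `⟨x|y⟩ = ∑ i, x i * y i` on `ℂ^k`. -/
noncomputable def bil (k : ℕ) (x y : Fin k → ℂ) : ℂ := ∑ i, x i * y i

/-- `π` is the bounded affine permutation of `A`:
`π a` is the least `r` with `a ≤ r ≤ a + n` and `A a ∈ span(A (a+1), …, A r)`. -/
def IsBAP (k n : ℕ) (A : ℤ → Fin k → ℂ) (π : ℤ → ℤ) : Prop :=
  ∀ a : ℤ,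
    a ≤ π a ∧ π a ≤ a + (n : ℤ) ∧
    A a ∈ Submodule.span ℂ (A '' Set.Ioc a (π a)) ∧
    ∀ r : ℤ, a ≤ r → r ≤ a + (n : ℤ) →
      A a ∈ Submodule.span ℂ (A '' Set.Ioc a r) → π a ≤ r

/-- `T` is the right twist `τ→(A)`: for each `a`, the column `T a` pairs to `1`
with `A a` and to `0` with the other columns of the `a`-minimal basis. -/
def IsRightTwist (k n : ℕ) (A T : ℤ → Fin k → ℂ) : Prop :=
  ∀ (a : ℤ) (I : Finset ℤ), IsMinBasis k n A a I →
    ∀ b ∈ I, bil k (T a) (A b) = if b = a then 1 else 0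

/-- `T` is the left twist `τ←(A)`: for each `a`, the column `T a` pairs to `1`
with `A a` and to `0` with the other columns of the `a`-maximal basis. -/
def IsLeftTwist (k n : ℕ) (A T : ℤ → Fin k → ℂ) : Prop :=
  ∀ (a : ℤ) (I : Finset ℤ), IsMaxBasis k n A a I →
    ∀ b ∈ I, bil k (T a) (A b) = if b = a then 1 else 0

/-- `Δ_I(A)`, where `I = {i 0 < i 1 < ⋯ < i (k-1)}` is given by a strictly
monotone enumeration `i : Fin k → ℤ`: the determinant of the `k×k` matrix with
columns `A (i 0), …, A (i (k-1))`. -/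
noncomputable def Delta (k : ℕ) (A : ℤ → Fin k → ℂ) (i : Fin k → ℤ) : ℂ :=
  Matrix.det (Matrix.of fun r s : Fin k => A (i s) r)

/-!
The `b`-minimal basis is the set of pivot columns of the window `A b, …, A (b + n - 1)`, the
columns outside the span of the earlier ones. So `τ→(A) b` pairs to zero with every `A c`,
`b < c < π b`: such a column lies in the span of the pivots among `A b, …, A c`, and it cannot
involve `A b` because `A b ∉ span(A (b + 1), …, A c)`. Hence each `τ→(A) b` with `a ⇒_π b` is
orthogonal to `A a, …, A (π a - 1)`, and ordering the `b` makes the pairing matrix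
`⟨τ→(A) b | A c⟩` unitriangular, so these columns are independent. Counting ranks along the
window `[π a - n, π a)` from the right shows that there are exactly
`k - dim span(A a, …, A (π a - 1))` of them, the dimension of the orthogonal complement.
-/

open Submodule Module

section Triangular

variable {ι R M : Type*} [LinearOrder ι] [Ring R] [NoZeroDivisors R] [AddCommGroup M]
  [Module R M]

theorem linearIndependent_of_triangular {v : ι → M} (φ : ι → M →ₗ[R] R)
    (hdiag : ∀ i, φ i (v i) ≠ 0) (htri : ∀ i j, i < j → φ j (v i) = 0) :
    LinearIndependent R v := by
  classical
  rw [linearIndependent_iff']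
  intro s
  induction s using Finset.induction_on_max with
  | empty => simp
  | insert j s hlt ih =>
    intro g hsum i hi
    have hj : g j = 0 := by
      have h := congrArg (φ j) hsum
      rw [Finset.sum_insert (fun hj => (hlt j hj).false), map_add, map_sum,
        Finset.sum_eq_zero fun i hi => by rw [map_smul, htri i j (hlt i hi), smul_zero],
        map_smul, smul_eq_mul, add_zero, map_zero] at h
      exact (mul_eq_zero.1 h).resolve_right (hdiag j)
    rw [Finset.sum_insert (fun hj => (hlt j hj).false), hj, zero_smul, zero_add] at hsum
    rcases Finset.mem_insert.1 hi with rfl | hi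
    · exact hj
    · exact ih g hsum i hi

end Triangular

section ColumnSpans

variable (K : Type*) {V : Type*} [Field K] [AddCommGroup V] [Module K V]

def colSpan (A : ℤ → V) (u m : ℤ) : Submodule K V :=
  span K (A '' Set.Ico u m)

open Classical in
noncomputable def pivots (A : ℤ → V) (u m : ℤ) : Finset ℤ :=
  {j ∈ Finset.Ico u m | A j ∉ colSpan K A u j}

variable {K} {A : ℤ → V}

theorem LinearIndepOn.finrank_span_image_eq_card {ι : Type*} {v : ι → V} {s : Finset ι}
    (hs : LinearIndepOn K v s) : finrank K (span K (v '' s)) = s.card := by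
  rw [Set.image_eq_range, finrank_span_eq_card hs]
  simp

theorem finrank_span_insert_of_notMem [FiniteDimensional K V] {x : V} {s : Set V}
    (hx : x ∉ span K s) : finrank K (span K (insert x s)) = finrank K (span K s) + 1 := by
  have hx0 : x ≠ 0 := fun h => hx (h ▸ zero_mem _)
  have hdisj : span K s ⊓ K ∙ x = ⊥ := disjoint_iff.1 ((disjoint_span_singleton' hx0).2 hx)
  have h := finrank_sup_add_finrank_inf_eq (span K s) (K ∙ x)
  rwa [hdisj, finrank_bot, add_zero, finrank_span_singleton hx0, sup_comm, ← span_insert] at h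

theorem colSpan_eq_bot {u m : ℤ} (h : m ≤ u) : colSpan K A u m = ⊥ := by
  rw [colSpan, Set.Ico_eq_empty (not_lt.2 h), Set.image_empty, span_empty]

theorem mem_colSpan {u m j : ℤ} (huj : u ≤ j) (hjm : j < m) : A j ∈ colSpan K A u m :=
  subset_span ⟨j, ⟨huj, hjm⟩, rfl⟩

theorem colSpan_mono {u u' m m' : ℤ} (hu : u' ≤ u) (hm : m ≤ m') :
    colSpan K A u m ≤ colSpan K A u' m' :=
  span_mono (Set.image_mono (Set.Ico_subset_Ico hu hm))

theorem colSpan_add_one_right {u m : ℤ} (h : u ≤ m) :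
    colSpan K A u (m + 1) = span K (insert (A m) (A '' Set.Ico u m)) := by
  rw [colSpan, ← Set.image_insert_eq]
  congr 2
  ext j
  simp only [Set.mem_Ico, Set.mem_insert_iff]
  omega

theorem colSpan_eq_span_insert_left {u m : ℤ} (h : u < m) :
    colSpan K A u m = span K (insert (A u) (A '' Set.Ico (u + 1) m)) := by
  rw [colSpan, ← Set.image_insert_eq]
  congr 2
  ext j
  simp only [Set.mem_Ico, Set.mem_insert_iff]
  omega

theorem colSpan_add_one_add_one (u m : ℤ) :
    colSpan K A (u + 1) (m + 1) = span K (A '' Set.Ioc u m) := by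
  rw [colSpan]
  congr 2
  ext j
  simp only [Set.mem_Ico, Set.mem_Ioc]
  omega

theorem mem_pivots {u m j : ℤ} :
    j ∈ pivots K A u m ↔ u ≤ j ∧ j < m ∧ A j ∉ colSpan K A u j := by
  classical
  simp [pivots, and_assoc]

theorem pivots_add_one_right_of_mem {u m : ℤ} (hm : A m ∈ colSpan K A u m) :
    pivots K A u (m + 1) = pivots K A u m := by
  ext j
  simp only [mem_pivots]
  constructor
  · rintro ⟨h1, h2, h3⟩
    have : j ≠ m := by rintro rfl; exact h3 hm
    exact ⟨h1, by omega, h3⟩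
  · rintro ⟨h1, h2, h3⟩
    exact ⟨h1, by omega, h3⟩

theorem pivots_add_one_right_of_notMem {u m : ℤ} (h : u ≤ m) (hm : A m ∉ colSpan K A u m) :
    pivots K A u (m + 1) = insert m (pivots K A u m) := by
  ext j
  simp only [mem_pivots, Finset.mem_insert]
  constructor
  · rintro ⟨h1, h2, h3⟩
    rcases eq_or_ne j m with rfl | hne
    · exact Or.inl rfl
    · exact Or.inr ⟨h1, by omega, h3⟩
  · rintro (rfl | ⟨h1, h2, h3⟩)
    · exact ⟨h, by omega, hm⟩
    · exact ⟨h1, by omega, h3⟩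

theorem pivots_eq_empty {u m : ℤ} (h : m ≤ u) : pivots K A u m = ∅ :=
  Finset.eq_empty_of_forall_notMem fun j hj => by rw [mem_pivots] at hj; omega

theorem linearIndepOn_pivots_and_span_eq (u m : ℤ) :
    LinearIndepOn K A (pivots K A u m) ∧ span K (A '' pivots K A u m) = colSpan K A u m := by
  have hempty : ∀ m ≤ u,
      LinearIndepOn K A (pivots K A u m) ∧ span K (A '' pivots K A u m) = colSpan K A u m := by
    intro m hmu
    rw [pivots_eq_empty hmu, colSpan_eq_bot hmu, Finset.coe_empty, Set.image_empty, span_empty]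
    exact ⟨linearIndepOn_empty K A, rfl⟩
  rcases le_total m u with hmu | hum
  · exact hempty m hmu
  induction m, hum using Int.leInduction with
  | base => exact hempty u le_rfl
  | succ m hum ih =>
    obtain ⟨hind, hspan⟩ := ih
    by_cases hm : A m ∈ colSpan K A u m
    · rw [pivots_add_one_right_of_mem hm, colSpan_add_one_right hum, span_insert_eq_span hm]
      exact ⟨hind, hspan⟩
    · rw [pivots_add_one_right_of_notMem hum hm, colSpan_add_one_right hum, Finset.coe_insert,
        Set.image_insert_eq, span_insert, hspan, span_insert]
      rw [← hspan] at hm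
      exact ⟨hind.insert hm, rfl⟩

theorem card_pivots (u m : ℤ) : (pivots K A u m).card = finrank K (colSpan K A u m) := by
  obtain ⟨hind, hspan⟩ := linearIndepOn_pivots_and_span_eq (K := K) (A := A) u m
  rw [← hspan, hind.finrank_span_image_eq_card]

theorem pivots_filter_lt {u m t : ℤ} (ht : t ≤ m) :
    {j ∈ pivots K A u m | j < t} = pivots K A u t := by
  ext j
  simp only [Finset.mem_filter, mem_pivots]
  constructor
  · rintro ⟨⟨h1, -, h3⟩, h4⟩
    exact ⟨h1, h4, h3⟩
  · rintro ⟨h1, h2, h3⟩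
    exact ⟨⟨h1, by omega, h3⟩, h2⟩

open Classical in
theorem card_filter_notMem_colSpan [FiniteDimensional K V] {u m : ℤ} (h : u ≤ m) :
    {j ∈ Finset.Ico u m | A j ∉ colSpan K A (j + 1) m}.card = finrank K (colSpan K A u m) := by
  induction u, h using Int.leInductionDown with
  | base => rw [colSpan_eq_bot le_rfl]; simp
  | pred u hum ih =>
    have hIco : Finset.Ico (u - 1) m = insert (u - 1) (Finset.Ico u m) := by
      ext j; simp only [Finset.mem_Ico, Finset.mem_insert]; omega
    rw [hIco, Finset.filter_insert, sub_add_cancel,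
      colSpan_eq_span_insert_left (show u - 1 < m by omega), sub_add_cancel]
    by_cases hu : A (u - 1) ∈ colSpan K A u m
    · rw [if_neg (not_not.2 hu), span_insert_eq_span hu, ih, colSpan]
    · rw [if_pos hu, Finset.card_insert_of_notMem (by simp), ih,
        finrank_span_insert_of_notMem hu, colSpan]

theorem card_filter_lt_le_finrank_colSpan [FiniteDimensional K V] {b : ℤ} {J : Finset ℤ}
    (hJ : ∀ j ∈ J, b ≤ j) (hind : LinearIndepOn K A J) (t : ℤ) :
    {j ∈ J | j < t}.card ≤ finrank K (colSpan K A b t) := by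
  rw [← (hind.mono (Finset.coe_subset.2 (Finset.filter_subset _ J))).finrank_span_image_eq_card]
  refine Submodule.finrank_mono (span_le.2 ?_)
  rintro _ ⟨j, hj, rfl⟩
  obtain ⟨hjJ, hjt⟩ := Finset.mem_filter.1 (Finset.mem_coe.1 hj)
  exact mem_colSpan (hJ j hjJ) hjt

theorem colSpan_eq_top_of_periodic {A : ℤ → V} {p : ℤ} (hper : Function.Periodic A p)
    (hp : 0 < p) (hA : span K (Set.range A) = ⊤) (u : ℤ) : colSpan K A u (u + p) = ⊤ := by
  rw [eq_top_iff, ← hA, span_le]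
  rintro _ ⟨c, rfl⟩
  have hc := hper.int_mul ((c - u) / p) (u + (c - u) % p)
  rw [Int.cast_id, show u + (c - u) % p + (c - u) / p * p = c by
    linear_combination Int.emod_add_mul_ediv (c - u) p] at hc
  rw [hc]
  have h0 := Int.emod_nonneg (c - u) hp.ne'
  have h1 := Int.emod_lt_of_pos (c - u) hp
  exact mem_colSpan (by omega) (by omega)

end ColumnSpans

section DotProduct

variable {ι K : Type*} [Fintype ι] [CommRing K]

theorem dotProductBilin_nondegenerate :
    (dotProductBilin K K : LinearMap.BilinForm K (ι → K)).Nondegenerate :=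
  ⟨fun _ hx => dotProduct_eq_zero_iff.1 hx,
    fun _ hy => dotProduct_eq_zero_iff.1 fun w => by rw [dotProduct_comm]; exact hy w⟩

theorem mem_orthogonal_dotProductBilin_iff {W : Submodule K (ι → K)} {v : ι → K} :
    v ∈ LinearMap.BilinForm.orthogonal (dotProductBilin K K) W ↔
      ∀ w ∈ W, v ⬝ᵥ w = 0 := by
  rw [LinearMap.BilinForm.mem_orthogonal_iff]
  refine forall₂_congr fun w _ => ?_
  rw [dotProductBilin_apply_apply, dotProduct_comm]

end DotProduct

theorem galeLE_of_card_filter_lt_le {B C : Finset ℤ} (hBC : B.card = C.card)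
    (h : ∀ t, {x ∈ C | x < t}.card ≤ {x ∈ B | x < t}.card) : galeLE B C := by
  refine ⟨hBC, fun t => ?_⟩
  have hB := B.card_filter_add_card_filter_not (t ≤ ·)
  have hC := C.card_filter_add_card_filter_not (t ≤ ·)
  simp only [not_le] at hB hC
  have := h t
  omega

namespace IsBAP

variable {k n : ℕ} {A : ℤ → Fin k → ℂ} {π : ℤ → ℤ}

theorem le_iff_notMem_colSpan (hπ : IsBAP k n A π) {b m : ℤ} (hbm : b < m) (hmn : m ≤ b + n) :
    m ≤ π b ↔ A b ∉ colSpan ℂ A (b + 1) m := by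
  obtain ⟨-, -, hmem, hmin⟩ := hπ b
  constructor
  · intro hle hA
    have := hmin (m - 1) (by omega) (by omega) (by
      rwa [← colSpan_add_one_add_one, sub_add_cancel])
    omega
  · intro hA
    by_contra! hlt
    exact hA (colSpan_mono le_rfl (show π b + 1 ≤ m by omega) (by rwa [colSpan_add_one_add_one]))

theorem ne_zero (hπ : IsBAP k n A π) {b : ℤ} (hb : b < π b) : A b ≠ 0 := by
  have := (hπ.le_iff_notMem_colSpan (lt_add_one b) (by have := (hπ b).2.1; omega)).1 hb
  rwa [colSpan_eq_bot le_rfl, mem_bot] at this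

theorem apply_ne_of_lt (hπ : IsBAP k n A π) {b c : ℤ} (hbc : b < c) : π b ≠ π c := by
  intro hbc'
  obtain ⟨hb, hbn, hbmem, -⟩ := hπ b
  obtain ⟨hc, hcn, hcmem, -⟩ := hπ c
  set m := π b
  have hAm : A m ∈ colSpan ℂ A (b + 1) m := by
    rcases hc.eq_or_lt with hcm | hcm
    · rw [← hcm, Set.Ioc_self, Set.image_empty, span_empty, mem_bot] at hcmem
      rw [hbc', ← hcm, hcmem]
      exact zero_mem _
    · rw [← hbc'] at hcm hcmem
      rw [← colSpan_add_one_add_one, colSpan_add_one_right (by omega)] at hcmem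
      have hnot := (hπ.le_iff_notMem_colSpan hcm (by omega)).1 hbc'.le
      have := mem_span_insert_exchange hcmem hnot
      rw [← colSpan_eq_span_insert_left hcm] at this
      exact colSpan_mono (by omega) le_rfl this
  rw [← colSpan_add_one_add_one, colSpan_add_one_right (by omega), span_insert_eq_span hAm]
    at hbmem
  exact (hπ.le_iff_notMem_colSpan (by omega) hbn).1 le_rfl hbmem

theorem setOf_eq_coe_filter (hπ : IsBAP k n A π) (a : ℤ) :
    {b : ℤ | b < a ∧ a ≤ π a ∧ π a < π b} =
      ↑{b ∈ Finset.Ico (π a - n) a | π a < π b} := by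
  ext b
  simp only [Finset.coe_filter, Finset.mem_Ico]
  have ha := (hπ a).1
  have hbn := (hπ b).2.1
  constructor
  · rintro ⟨hba, -, hπb⟩
    exact ⟨⟨by omega, hba⟩, hπb⟩
  · rintro ⟨⟨-, hba⟩, hπb⟩
    exact ⟨hba, ha, hπb⟩

open Classical in
theorem card_filter_add_finrank_colSpan (hπ : IsBAP k n A π) (hper : ColPeriodic k n A)
    (hrank : FullRank k A) (hn : 0 < n) (a : ℤ) :
    {b ∈ Finset.Ico (π a - n) a | π a < π b}.card + finrank ℂ (colSpan ℂ A a (π a)) =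
      k := by
  obtain ⟨ha, han, -, -⟩ := hπ a
  set m := π a
  have hwindow : finrank ℂ (colSpan ℂ A (m - n) m) = k := by
    have := colSpan_eq_top_of_periodic hper (by exact_mod_cast hn) hrank (m - n)
    rw [sub_add_cancel] at this
    rw [this, finrank_top, finrank_fin_fun]
  have hfilter : {b ∈ Finset.Ico (m - n) a | m < π b} =
      {j ∈ Finset.Ico (m - n) a | A j ∉ colSpan ℂ A (j + 1) m} := by
    refine Finset.filter_congr fun j hj => ?_
    obtain ⟨h1, h2⟩ := Finset.mem_Ico.1 hj
    rw [← hπ.le_iff_notMem_colSpan (by omega) (by omega), le_iff_lt_or_eq, or_iff_left]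
    exact hπ.apply_ne_of_lt h2 ∘ Eq.symm
  rw [hfilter, ← card_filter_notMem_colSpan ha, ← Finset.card_union_of_disjoint,
    ← Finset.filter_union, Finset.Ico_union_Ico_eq_Ico (by omega) ha,
    card_filter_notMem_colSpan (by omega), hwindow]
  exact Finset.disjoint_filter_filter (Finset.Ico_disjoint_Ico_consecutive _ _ _)

end IsBAP

section Twist

variable {k n : ℕ} {A T : ℤ → Fin k → ℂ} {π : ℤ → ℤ}

theorem isMinBasis_pivots (hper : ColPeriodic k n A) (hrank : FullRank k A) (hn : 0 < n)
    (b : ℤ) : IsMinBasis k n A b (pivots ℂ A b (b + n)) := by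
  obtain ⟨hind, hspan⟩ := linearIndepOn_pivots_and_span_eq (K := ℂ) (A := A) b (b + n)
  have htop : colSpan ℂ A b (b + n) = ⊤ :=
    colSpan_eq_top_of_periodic hper (by exact_mod_cast hn) hrank b
  have hcard : (pivots ℂ A b (b + n)).card = k := by
    rw [card_pivots, htop, finrank_top, finrank_fin_fun]
  refine ⟨fun j hj => ?_, ⟨hcard, hind, hspan.trans htop⟩, fun J hJ hJbasis => ?_⟩
  · obtain ⟨h1, h2, -⟩ := mem_pivots.1 hj
    exact Finset.mem_Ico.2 ⟨h1, h2⟩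
  refine galeLE_of_card_filter_lt_le (hcard.trans hJbasis.1.symm) fun t => ?_
  rcases le_or_gt t (b + n) with ht | ht
  · rw [pivots_filter_lt ht, card_pivots]
    exact card_filter_lt_le_finrank_colSpan (fun j hj => (Finset.mem_Ico.1 (hJ hj)).1)
      hJbasis.2.1 t
  · rw [Finset.filter_true_of_mem fun j hj => (mem_pivots.1 hj).2.1.trans ht, hcard,
      ← hJbasis.1]
    exact Finset.card_filter_le _ _

theorem self_mem_pivots (hπ : IsBAP k n A π) {b m : ℤ} (hb : b < π b) (hbm : b < m) :
    b ∈ pivots ℂ A b m := by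
  rw [mem_pivots, colSpan_eq_bot le_rfl, mem_bot]
  exact ⟨le_rfl, hbm, hπ.ne_zero hb⟩

namespace IsRightTwist

theorem bil_self (hT : IsRightTwist k n A T) (hper : ColPeriodic k n A) (hrank : FullRank k A)
    (hπ : IsBAP k n A π) {b : ℤ} (hb : b < π b) : bil k (T b) (A b) = 1 := by
  have hn : 0 < n := by have := (hπ b).2.1; omega
  simpa using hT b _ (isMinBasis_pivots hper hrank hn b) b
    (self_mem_pivots hπ hb (by omega))

theorem bil_eq_zero (hT : IsRightTwist k n A T) (hper : ColPeriodic k n A)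
    (hrank : FullRank k A) (hπ : IsBAP k n A π) {b c : ℤ} (hbc : b < c) (hcπ : c < π b) :
    bil k (T b) (A c) = 0 := by
  have hbn := (hπ b).2.1
  have hn : 0 < n := by omega
  set Q := (pivots ℂ A b (c + 1)).erase b
  have hTQ : span ℂ (A '' Q) ≤ LinearMap.ker (dotProductBilin ℂ ℂ (T b)) := by
    refine span_le.2 ?_
    rintro _ ⟨j, hj, rfl⟩
    obtain ⟨hjb, hj⟩ := Finset.mem_erase.1 hj
    obtain ⟨h1, h2, h3⟩ := mem_pivots.1 hj
    have := hT b _ (isMinBasis_pivots hper hrank hn b) j (mem_pivots.2 ⟨h1, by omega, h3⟩)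
    rwa [if_neg hjb] at this
  have hQ : span ℂ (A '' Q) ≤ colSpan ℂ A (b + 1) (c + 1) := by
    refine span_le.2 ?_
    rintro _ ⟨j, hj, rfl⟩
    obtain ⟨hjb, hj⟩ := Finset.mem_erase.1 hj
    obtain ⟨h1, h2, -⟩ := mem_pivots.1 hj
    exact mem_colSpan (by omega) h2
  have hAc : A c ∈ span ℂ (insert (A b) (A '' Q)) := by
    rw [← Set.image_insert_eq, Finset.coe_erase, Set.insert_sdiff_singleton,
      Set.insert_eq_of_mem (self_mem_pivots hπ (by omega) (by omega)),
      (linearIndepOn_pivots_and_span_eq b (c + 1)).2]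
    exact mem_colSpan hbc.le (lt_add_one c)
  have hAcQ : A c ∈ span ℂ (A '' Q) := by
    by_contra hnot
    have hAb := mem_span_insert_exchange hAc hnot
    refine (hπ.le_iff_notMem_colSpan (by omega) (by omega)).1 hcπ ?_
    refine span_le.2 (Set.insert_subset ?_ (subset_span.trans hQ)) hAb
    exact mem_colSpan (by omega) (lt_add_one c)
  exact hTQ hAcQ

theorem mem_orthogonal_colSpan (hT : IsRightTwist k n A T) (hper : ColPeriodic k n A)
    (hrank : FullRank k A) (hπ : IsBAP k n A π) {a b : ℤ} (hba : b < a) (hπb : π a < π b) :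
    T b ∈ LinearMap.BilinForm.orthogonal (dotProductBilin ℂ ℂ) (colSpan ℂ A a (π a)) := by
  refine mem_orthogonal_dotProductBilin_iff.2 fun w hw => ?_
  have hker : colSpan ℂ A a (π a) ≤ LinearMap.ker (dotProductBilin ℂ ℂ (T b)) := by
    refine span_le.2 ?_
    rintro _ ⟨c, ⟨hac, hcπ⟩, rfl⟩
    exact hT.bil_eq_zero hper hrank hπ (by omega) (by omega)
  exact hker hw

theorem linearIndependent_subfamily (hT : IsRightTwist k n A T) (hper : ColPeriodic k n A)
    (hrank : FullRank k A) (hπ : IsBAP k n A π) (a : ℤ) :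
    LinearIndependent ℂ (fun b : {b : ℤ // b < a ∧ a ≤ π a ∧ π a < π b} => T b) := by
  refine linearIndependent_of_triangular (fun c => (dotProductBilin ℂ ℂ).flip (A c))
    (fun b => ?_) (fun b c hbc => ?_)
  · obtain ⟨b, hba, hπa, hπb⟩ := b
    change bil k (T b) (A b) ≠ 0
    rw [hT.bil_self hper hrank hπ (by omega)]
    exact one_ne_zero
  · obtain ⟨hca, -⟩ := c.2
    obtain ⟨-, hπa, hπb⟩ := b.2
    exact hT.bil_eq_zero hper hrank hπ hbc (by omega)

end IsRightTwist

end Twist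

/-- twist columns and orthogonal complements: for every
`a`, the finite family `{τ→(A) b : a ⇒_π b}` is a basis of the orthogonal
complement of `span(A a, A (a+1), …, A (π a - 1))` with respect to the
standard symmetric bilinear form: it is linearly independent and its span is
exactly `{v : ⟨v|w⟩ = 0 for all w in that span}`.  Here `a ⇒_π b` means
`b < a ≤ π a < π b`. -/
theorem twist_orthocomplement
    (k n : ℕ) (hk : 1 ≤ k) (hkn : k ≤ n)
    (A : ℤ → Fin k → ℂ) (hper : ColPeriodic k n A) (hrank : FullRank k A)
    (π : ℤ → ℤ) (hπ : IsBAP k n A π)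
    (T : ℤ → Fin k → ℂ) (hT : IsRightTwist k n A T)
    (a : ℤ) :
    LinearIndependent ℂ
      (fun b : {b : ℤ // b < a ∧ a ≤ π a ∧ π a < π b} => T (b : ℤ)) ∧
    ∀ v : Fin k → ℂ,
      v ∈ Submodule.span ℂ (T '' {b : ℤ | b < a ∧ a ≤ π a ∧ π a < π b}) ↔
      ∀ w ∈ Submodule.span ℂ (A '' Set.Ico a (π a)), bil k v w = 0 := by
  have hn : 0 < n := by omega
  set B : LinearMap.BilinForm ℂ (Fin k → ℂ) := dotProductBilin ℂ ℂ
  have hind := hT.linearIndependent_subfamily hper hrank hπ a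
  have hle : span ℂ (T '' {b | b < a ∧ a ≤ π a ∧ π a < π b}) ≤
      B.orthogonal (colSpan ℂ A a (π a)) := by
    refine span_le.2 ?_
    rintro _ ⟨b, ⟨hba, -, hπb⟩, rfl⟩
    exact hT.mem_orthogonal_colSpan hper hrank hπ hba hπb
  have hdim : finrank ℂ (B.orthogonal (colSpan ℂ A a (π a))) ≤
      finrank ℂ (span ℂ (T '' {b | b < a ∧ a ≤ π a ∧ π a < π b})) := by
    have hcount := hπ.card_filter_add_finrank_colSpan hper hrank hn a
    have hindS : LinearIndepOn ℂ T {b | b < a ∧ a ≤ π a ∧ π a < π b} := hind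
    rw [hπ.setOf_eq_coe_filter a] at hindS
    rw [LinearMap.BilinForm.finrank_orthogonal dotProductBilin_nondegenerate, finrank_fin_fun,
      hπ.setOf_eq_coe_filter a, hindS.finrank_span_image_eq_card]
    omega
  refine ⟨hind, fun v => ?_⟩
  rw [eq_of_le_of_finrank_le hle hdim, mem_orthogonal_dotProductBilin_iff]
  rfl
end

section
/- Plücker coordinates of the twist in the 2×n case: for all i, j ∈ ℤ, det(τ→(A)_i, τ→(A)_j) = det(A_{i+1}, A_{j+1}) / ( det(A_i, A_{i+1}) · det(A_j, A_{j+1}) ). -/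
/-- The determinant `det(x, y)` of the `2×2` matrix with columns `x, y`. -/
noncomputable def det2 (x y : Fin 2 → ℂ) : ℂ := x 0 * y 1 - x 1 * y 0

/-- The standard symmetric bilinear form `⟨x|y⟩ = x₁y₁ + x₂y₂` on `ℂ²`. -/
noncomputable def bil2 (x y : Fin 2 → ℂ) : ℂ := x 0 * y 0 + x 1 * y 1

/-- `T` is the right twist of the `2×n` matrix `A` (with all cyclically
consecutive `2×2` minors nonzero, so that its `i`-minimal column basis is
`{i, i+1}`): the `i`-th column of `T` is the unique `v ∈ ℂ²` with
`⟨v|A i⟩ = 1` and `⟨v|A (i+1)⟩ = 0`. -/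
def IsTwist2 (A T : ℤ → Fin 2 → ℂ) : Prop :=
  ∀ i : ℤ, bil2 (T i) (A i) = 1 ∧ bil2 (T i) (A (i + 1)) = 0

/-! Since `A i, A (i+1)` is a basis, the twist is forced to be
`T i = perp (A (i+1)) / det(A i, A (i+1))`, where `perp` is the quarter turn
`(y₀, y₁) ↦ (y₁, -y₀)`: it turns `⟨·|·⟩` into `det` and preserves `det`. The formula for
`det(T i, T j)` then follows from bilinearity of `det`. -/

def perp (y : Fin 2 → ℂ) : Fin 2 → ℂ := ![y 1, -y 0]

theorem bil2_perp_left (x y : Fin 2 → ℂ) : bil2 (perp y) x = det2 x y := by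
  simp only [bil2, det2, perp, Matrix.cons_val_zero, Matrix.cons_val_one]
  ring

theorem det2_perp_perp (x y : Fin 2 → ℂ) : det2 (perp x) (perp y) = det2 x y := by
  simp only [det2, perp, Matrix.cons_val_zero, Matrix.cons_val_one]
  ring

theorem det2_smul_smul (a b : ℂ) (x y : Fin 2 → ℂ) :
    det2 (a • x) (b • y) = a * b * det2 x y := by
  simp only [det2, Pi.smul_apply, smul_eq_mul]
  ring

theorem bil2_smul_left (a : ℂ) (x y : Fin 2 → ℂ) : bil2 (a • x) y = a * bil2 x y := by
  simp only [bil2, Pi.smul_apply, smul_eq_mul]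
  ring

theorem det2_self (x : Fin 2 → ℂ) : det2 x x = 0 := by
  simp only [det2]
  ring

theorem eq_of_bil2_eq_of_det2_ne_zero {x y v w : Fin 2 → ℂ} (hxy : det2 x y ≠ 0)
    (hx : bil2 v x = bil2 w x) (hy : bil2 v y = bil2 w y) : v = w := by
  simp only [bil2, det2] at hx hy hxy
  have h0 : v 0 = w 0 := mul_right_cancel₀ hxy (by linear_combination y 1 * hx - x 1 * hy)
  have h1 : v 1 = w 1 := mul_right_cancel₀ hxy (by linear_combination x 0 * hy - y 0 * hx)
  ext k
  fin_cases k
  exacts [h0, h1]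

theorem IsTwist2.eq_smul_perp {A T : ℤ → Fin 2 → ℂ} (hT : IsTwist2 A T) {i : ℤ}
    (hi : det2 (A i) (A (i + 1)) ≠ 0) :
    T i = (det2 (A i) (A (i + 1)))⁻¹ • perp (A (i + 1)) := by
  refine eq_of_bil2_eq_of_det2_ne_zero hi ?_ ?_
  · rw [(hT i).1, bil2_smul_left, bil2_perp_left, inv_mul_cancel₀ hi]
  · rw [(hT i).2, bil2_smul_left, bil2_perp_left, det2_self, mul_zero]

theorem twist2_plucker_general
    (A : ℤ → Fin 2 → ℂ)
    (hminor : ∀ i : ℤ, det2 (A i) (A (i + 1)) ≠ 0)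
    (T : ℤ → Fin 2 → ℂ) (hT : IsTwist2 A T) :
    ∀ i j : ℤ,
      det2 (T i) (T j) =
        det2 (A (i + 1)) (A (j + 1)) /
          (det2 (A i) (A (i + 1)) * det2 (A j) (A (j + 1))) := by
  intro i j
  rw [hT.eq_smul_perp (hminor i), hT.eq_smul_perp (hminor j), det2_smul_smul, det2_perp_perp,
    ← mul_inv, inv_mul_eq_div]

/-- Plücker coordinates of the twist in the `2×n` case:
for all `i, j ∈ ℤ`,
`det(τ→(A) i, τ→(A) j) = det(A (i+1), A (j+1)) / (det(A i, A (i+1)) · det(A j, A (j+1)))`. -/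
theorem twist2_plucker
    (n : ℕ) (hn : 2 ≤ n)
    (A : ℤ → Fin 2 → ℂ) (hper : ∀ a : ℤ, A (a + (n : ℤ)) = A a)
    (hminor : ∀ i : ℤ, det2 (A i) (A (i + 1)) ≠ 0)
    (T : ℤ → Fin 2 → ℂ) (hT : IsTwist2 A T) :
    ∀ i j : ℤ,
      det2 (T i) (T j) =
        det2 (A (i + 1)) (A (j + 1)) /
          (det2 (A i) (A (i + 1)) * det2 (A j) (A (j + 1))) :=
  twist2_plucker_general A hminor T hT
end

section
/- The twist-orbit recursion of the D̃4 positroid example satisfies linear recurrences: all u_i and v_i are positive integers, and for every i ≥ 1, v_{i+1} = 5·v_i − v_{i−1} and u_{i+1} = 23·u_i − u_{i−1} − 4. (In particular (u_0, v_0) = (1,1), (u_1, v_1) = (17, 2), (u_2, v_2) = (386, 9), (u_3, v_3) = (8857, 43).) -/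
private def Wseq : ℕ → ℤ
  | 0 => 1
  | 1 => 2
  | (n+2) => 5 * Wseq (n+1) - Wseq n

private lemma Wpos : ∀ n, 0 < Wseq n ∧ Wseq n < Wseq (n+1)
  | 0 => by norm_num [Wseq]
  | (n+1) => by
    obtain ⟨h1, h2⟩ := Wpos n
    refine ⟨h1.trans h2, ?_⟩
    show Wseq (n+1) < 5 * Wseq (n+1) - Wseq n
    linarith

private lemma Winv : ∀ n, Wseq (n+1)^2 - 5*Wseq n*Wseq (n+1) + Wseq n^2 + 5 = 0
  | 0 => by norm_num [Wseq]
  | (n+1) => by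
    have h := Winv n
    have h2 : Wseq (n+2) = 5 * Wseq (n+1) - Wseq n := rfl
    rw [h2]; linear_combination h

private lemma Wkey (n : ℕ) :
    (Wseq n * Wseq (n+1) - 1) * (Wseq (n+1) * Wseq (n+2) - 1)
      = Wseq (n+1)^4 + 1 := by
  have h := Winv n
  have h2 : Wseq (n+2) = 5 * Wseq (n+1) - Wseq n := rfl
  rw [h2]; linear_combination (-(Wseq (n+1))^2) * h

private lemma Wrec2 (n : ℕ) :
    Wseq (n+2) * Wseq (n+3)
      = 23 * (Wseq (n+1) * Wseq (n+2)) - Wseq n * Wseq (n+1) - 25 := by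
  have h := Winv n
  have h2 : Wseq (n+2) = 5 * Wseq (n+1) - Wseq n := rfl
  have h3 : Wseq (n+3) = 5 * Wseq (n+2) - Wseq (n+1) := rfl
  rw [h3, h2]; linear_combination 5 * h

/-- the twist-orbit recursion of the D̃4 positroid example
satisfies linear recurrences: define rational sequences by `u 0 = v 0 = 1`,
`v (i+1) = (u i + 1) / v i` and `u (i+1) = ((v (i+1))^4 + 1) / u i`.  Then all
denominators appearing are nonzero, all `u i` and `v i` are positive integers,
and for every `i ≥ 1` one has `v (i+1) = 5·v i − v (i-1)` and
`u (i+1) = 23·u i − u (i-1) − 4`.  In particular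
`(u 0, v 0) = (1,1)`, `(u 1, v 1) = (17, 2)`, `(u 2, v 2) = (386, 9)`,
`(u 3, v 3) = (8857, 43)`. -/
theorem twist_orbit_linear_recurrences
    (u v : ℕ → ℚ) (hu0 : u 0 = 1) (hv0 : v 0 = 1)
    (hv : ∀ i : ℕ, v (i + 1) = (u i + 1) / v i)
    (hu : ∀ i : ℕ, u (i + 1) = ((v (i + 1)) ^ 4 + 1) / u i) :
    (∀ i : ℕ, u i ≠ 0 ∧ v i ≠ 0) ∧
    (∀ i : ℕ, (∃ a : ℤ, 0 < a ∧ u i = (a : ℚ)) ∧ (∃ b : ℤ, 0 < b ∧ v i = (b : ℚ))) ∧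
    (∀ i : ℕ, v (i + 2) = 5 * v (i + 1) - v i) ∧
    (∀ i : ℕ, u (i + 2) = 23 * u (i + 1) - u i - 4) ∧
    u 1 = 17 ∧ v 1 = 2 ∧ u 2 = 386 ∧ v 2 = 9 ∧ u 3 = 8857 ∧ v 3 = 43 := by
  -- basic facts about Wseq
  have hW1 : ∀ n, (1 : ℤ) ≤ Wseq n := fun n => (Wpos n).1
  have hW2 : ∀ n, (2 : ℤ) ≤ Wseq (n+1) := by
    intro n; have := (Wpos n).1; have := (Wpos n).2; omega
  have hupos : ∀ n, (0 : ℤ) < Wseq n * Wseq (n+1) - 1 := by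
    intro n
    have h1 := hW1 n; have h2 := hW2 n
    nlinarith
  -- main induction
  have key : ∀ n, v n = (Wseq n : ℚ) ∧ u n = ((Wseq n * Wseq (n+1) - 1 : ℤ) : ℚ) := by
    intro n
    induction n with
    | zero =>
      constructor
      · rw [hv0]; norm_num [Wseq]
      · rw [hu0]; norm_num [Wseq]
    | succ n ih =>
      obtain ⟨hvn, hun⟩ := ih
      have hWne : ((Wseq n : ℚ)) ≠ 0 := by
        exact_mod_cast (hW1 n).trans_lt' (by norm_num) |>.ne'
      have hune : (((Wseq n * Wseq (n+1) - 1 : ℤ) : ℚ)) ≠ 0 := by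
        exact_mod_cast (hupos n).ne'
      have hvn1 : v (n+1) = (Wseq (n+1) : ℚ) := by
        rw [hv n, hun, hvn, div_eq_iff hWne]
        push_cast
        ring
      refine ⟨hvn1, ?_⟩
      rw [hu n, hvn1, hun]
      rw [div_eq_iff hune]
      have hQ := congrArg (Int.cast : ℤ → ℚ) (Wkey n)
      push_cast at hQ ⊢
      linear_combination -hQ
  obtain ⟨hv1, hu1⟩ := key 1
  obtain ⟨hv2, hu2⟩ := key 2
  obtain ⟨hv3, hu3⟩ := key 3
  refine ⟨?_, ?_, ?_, ?_, ?_, ?_, ?_, ?_, ?_, ?_⟩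
  · intro i
    obtain ⟨h1, h2⟩ := key i
    constructor
    · rw [h2]; exact_mod_cast (hupos i).ne'
    · rw [h1]; exact_mod_cast ((hW1 i).trans_lt' (by norm_num)).ne'
  · intro i
    obtain ⟨h1, h2⟩ := key i
    exact ⟨⟨_, hupos i, h2⟩, ⟨_, (hW1 i).trans_lt' (by norm_num), h1⟩⟩
  · intro i
    obtain ⟨h0, _⟩ := key i
    obtain ⟨h1, _⟩ := key (i+1)
    obtain ⟨h2, _⟩ := key (i+2)
    rw [h0, h1, h2]
    have : Wseq (i+2) = 5 * Wseq (i+1) - Wseq i := rfl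
    rw [this]; push_cast; ring
  · intro i
    obtain ⟨_, h0⟩ := key i
    obtain ⟨_, h1⟩ := key (i+1)
    obtain ⟨_, h2⟩ := key (i+2)
    rw [h0, h1, h2]
    have hQ := congrArg (Int.cast : ℤ → ℚ) (Wrec2 i)
    push_cast at hQ ⊢
    linear_combination hQ
  · rw [hu1]; norm_num [Wseq]
  · rw [hv1]; norm_num [Wseq]
  · rw [hu2]; norm_num [Wseq]
  · rw [hv2]; norm_num [Wseq]
  · rw [hu3]; norm_num [Wseq]
  · rw [hv3]; norm_num [Wseq]
end
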